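/- Let A = k[x]/(x^n), n ≥ 3, with the 2-periodic resolution P (generators e_i, differentials by multiplication by u = x⊗1−1⊗x and v = Σ_{a+b=n−1} x^a⊗x^b). Define δ₂(e_{2i}) = Σ_{j+l=i} e_{2j}⊗_A e_{2l} − Σ_{j+l=i, a+b+c=n−2} x^a e_{2j+1} ⊗_A x^b e_{2l−1} x^c and δ₂(e_{2i+1}) = Σ_{j+l=i} e_{2j}⊗_A e_{2l+1} − Σ_{j+l=i} e_{2j+1}⊗_A e_{2l}. Then δ₂ is a chain map P → P⊗_A P (commutes with the differentials with Koszul signs). -/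
import Mathlib


open TensorProduct DirectSum

set_option synthInstance.maxHeartbeats 1000000
set_option maxHeartbeats 2000000

namespace Stmt15

variable (k : Type*) [Field k] (n : ℕ)

/-- The algebra `A = k[x]/(xⁿ)`. -/
abbrev A : Type _ := Polynomial k ⧸ Ideal.span {(Polynomial.X : Polynomial k) ^ n}

/-- The class of `x`. -/
noncomputable def x : A k n := Ideal.Quotient.mk _ Polynomial.X

abbrev T2 : Type _ := A k n ⊗[k] A k n
abbrev T3 : Type _ := A k n ⊗[k] (A k n ⊗[k] A k n)

noncomputable instance : AddCommGroup (T2 k n) := inferInstance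
noncomputable instance : Module k (T2 k n) := inferInstance
noncomputable instance : AddCommGroup (T3 k n) := inferInstance
noncomputable instance : Module k (T3 k n) := inferInstance
noncomputable instance : CommRing (T2 k n) := inferInstance
noncomputable instance : Algebra k (T2 k n) := inferInstance
noncomputable instance : CommRing (T3 k n) := inferInstance
noncomputable instance : Algebra k (T3 k n) := inferInstance

/-- `u = x⊗1 − 1⊗x`. -/
noncomputable def u : T2 k n := x k n ⊗ₜ[k] 1 - 1 ⊗ₜ[k] x k n

/-- `v = Σ_{a+b=n−1} x^a ⊗ x^b`. -/
noncomputable def v : T2 k n :=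
  ∑ a ∈ Finset.range n, (x k n ^ a) ⊗ₜ[k] (x k n ^ (n - 1 - a))

/-- The multiplier of the differential `d(e_i) = e_{i−1}·w i`: `u` out of
odd-indexed generators, `v` out of even ones (the resolution ends
`⋯ →·v A⊗A →·u A⊗A →μ A`). -/
noncomputable def w (i : ℕ) : T2 k n := if Odd i then u k n else v k n

/-- The shifted 2-periodic resolution `P = ⊕_{i∈ℕ} (A⊗A)·e_i`. -/
abbrev M : Type _ := ⨁ _i : ℕ, T2 k n

/-- `P ⊗_A P = ⊕_{(j,l)} (A⊗A⊗A)·(e_j ⊗ e_l)`. -/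
abbrev N : Type _ := ⨁ _p : ℕ × ℕ, T3 k n

/-- The differential of `P`. -/
noncomputable def dP : M k n →ₗ[k] M k n :=
  DirectSum.toModule k ℕ (M k n) fun i =>
    match i with
    | 0 => 0
    | (j + 1) =>
        (DirectSum.lof k ℕ (fun _ => T2 k n) j) ∘ₗ LinearMap.mulRight k (w k n (j + 1))

/-- `a⊗b ↦ a⊗1⊗b`. -/
noncomputable def ι13 : T2 k n →ₗ[k] T3 k n :=
  TensorProduct.map LinearMap.id ((TensorProduct.mk k (A k n) (A k n)) 1)

/-- The component map of `δ₂` corresponding to the term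
`− Σ_{a+b+c=n−2} x^a e_{2j+1} ⊗_A x^b e_{2l−1} x^c` (without the sign):
`α ⊗ β ↦ Σ_{a+b+c=n−2} (α x^a) ⊗ x^b ⊗ (x^c β)`. -/
noncomputable def g : T2 k n →ₗ[k] T3 k n :=
  ∑ t ∈ Finset.Nat.antidiagonalTuple 3 (n - 2),
    TensorProduct.map (LinearMap.mulRight k (x k n ^ (t 0)))
      (((TensorProduct.mk k (A k n) (A k n)) (x k n ^ (t 1))) ∘ₗ
        LinearMap.mulLeft k (x k n ^ (t 2)))

/-- The diagonal `δ₂ : P → P ⊗_A P`: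
`δ₂(e_{2i}) = Σ_{j+l=i} e_{2j} ⊗ e_{2l} − Σ_{j+l=i, a+b+c=n−2} x^a e_{2j+1} ⊗ x^b e_{2l−1} x^c`,
`δ₂(e_{2i+1}) = Σ_{j+l=i} e_{2j} ⊗ e_{2l+1} − Σ_{j+l=i} e_{2j+1} ⊗ e_{2l}`. -/
noncomputable def δ₂ : M k n →ₗ[k] N k n :=
  DirectSum.toModule k ℕ (N k n) fun m =>
    if Even m then
      ∑ j ∈ Finset.range (m / 2 + 1),
          (DirectSum.lof k (ℕ × ℕ) (fun _ => T3 k n) (2 * j, m - 2 * j)) ∘ₗ ι13 k n -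
        ∑ j ∈ Finset.range (m / 2),
          (DirectSum.lof k (ℕ × ℕ) (fun _ => T3 k n) (2 * j + 1, m - 2 * j - 1)) ∘ₗ g k n
    else
      ∑ j ∈ Finset.range (m / 2 + 1),
          (DirectSum.lof k (ℕ × ℕ) (fun _ => T3 k n) (2 * j, m - 2 * j)) ∘ₗ ι13 k n -
        ∑ j ∈ Finset.range (m / 2 + 1),
          (DirectSum.lof k (ℕ × ℕ) (fun _ => T3 k n) (2 * j + 1, m - 2 * j - 1)) ∘ₗ ι13 k n

/-- `w m` embedded in the first two tensor slots of `A⊗A⊗A`. -/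
noncomputable def e12 (m : ℕ) : T3 k n :=
  if Odd m then x k n ⊗ₜ[k] ((1 : A k n) ⊗ₜ[k] 1) - 1 ⊗ₜ[k] (x k n ⊗ₜ[k] 1)
  else ∑ a ∈ Finset.range n, (x k n ^ a) ⊗ₜ[k] ((x k n ^ (n - 1 - a)) ⊗ₜ[k] 1)

/-- `w m` embedded in the last two tensor slots of `A⊗A⊗A`. -/
noncomputable def e23 (m : ℕ) : T3 k n :=
  if Odd m then 1 ⊗ₜ[k] (x k n ⊗ₜ[k] (1 : A k n)) - 1 ⊗ₜ[k] ((1 : A k n) ⊗ₜ[k] x k n)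
  else ∑ a ∈ Finset.range n, (1 : A k n) ⊗ₜ[k] ((x k n ^ a) ⊗ₜ[k] (x k n ^ (n - 1 - a)))

/-- The differential of `P ⊗_A P`: `d⊗1 + 1⊗d` with the Koszul sign `(−1)^{1−j}`
on the second summand (shifted degree of `e_j` is `1−j`). -/
noncomputable def dN : N k n →ₗ[k] N k n :=
  DirectSum.toModule k (ℕ × ℕ) (N k n) fun p =>
    (match p with
      | (0, _) => 0
      | (j + 1, l) =>
          (DirectSum.lof k (ℕ × ℕ) (fun _ => T3 k n) (j, l)) ∘ₗ
            LinearMap.mulRight k (e12 k n (j + 1))) +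
    (match p with
      | (_, 0) => 0
      | (j, l + 1) =>
          ((-1 : ℤ) ^ (j + 1)) •
            ((DirectSum.lof k (ℕ × ℕ) (fun _ => T3 k n) (j, l)) ∘ₗ
              LinearMap.mulRight k (e23 k n (l + 1))))

section CombAux


/-- Sum over `antidiagonalTuple 3 s` as a double sum. -/
theorem adt3_sum {M : Type*} [AddCommMonoid M] (s : ℕ) (f : ℕ → ℕ → ℕ → M) :
    ∑ t ∈ Finset.Nat.antidiagonalTuple 3 s, f (t 0) (t 1) (t 2)
      = ∑ a ∈ Finset.range (s+1), ∑ b ∈ Finset.range (s - a + 1), f a b (s - a - b) := by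
  rw [show (∑ a ∈ Finset.range (s+1), ∑ b ∈ Finset.range (s - a + 1), f a b (s - a - b))
      = ∑ p ∈ (Finset.range (s+1)).sigma (fun a => Finset.range (s - a + 1)),
          f p.1 p.2 (s - p.1 - p.2) from Finset.sum_sigma' _ _ (fun a b => f a b (s - a - b))]
  refine Finset.sum_nbij' (fun t => ⟨t 0, t 1⟩) (fun p => ![p.1, p.2, s - p.1 - p.2]) ?_ ?_ ?_ ?_ ?_
  · intro t ht
    rw [Finset.Nat.mem_antidiagonalTuple, Fin.sum_univ_three] at ht
    simp only [Finset.mem_sigma, Finset.mem_range]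
    omega
  · intro p hp
    simp only [Finset.mem_sigma, Finset.mem_range] at hp
    rw [Finset.Nat.mem_antidiagonalTuple, Fin.sum_univ_three]
    simp only [Matrix.cons_val_zero, Matrix.cons_val_one, Matrix.head_cons,
      Matrix.cons_val_two, Matrix.tail_cons]
    omega
  · intro t ht
    rw [Finset.Nat.mem_antidiagonalTuple, Fin.sum_univ_three] at ht
    funext i
    fin_cases i <;> simp <;> omega
  · intro p hp
    simp only [Finset.mem_sigma, Finset.mem_range] at hp
    simp
  · intro t ht
    rw [Finset.Nat.mem_antidiagonalTuple, Fin.sum_univ_three] at ht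
    simp only [Matrix.cons_val_zero, Matrix.cons_val_one, Matrix.head_cons,
      Matrix.cons_val_two, Matrix.tail_cons]
    congr 1
    omega

theorem adt3_swap {M : Type*} [AddCommMonoid M] (s : ℕ) (f : ℕ → ℕ → ℕ → M) :
    ∑ t ∈ Finset.Nat.antidiagonalTuple 3 s, f (t 0) (t 1) (t 2)
      = ∑ t ∈ Finset.Nat.antidiagonalTuple 3 s, f (t 2) (t 1) (t 0) := by
  refine Finset.sum_nbij' (fun t => ![t 2, t 1, t 0]) (fun t => ![t 2, t 1, t 0]) ?_ ?_ ?_ ?_ ?_ <;>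
    intro t ht <;>
    rw [Finset.Nat.mem_antidiagonalTuple, Fin.sum_univ_three] at ht
  · rw [Finset.Nat.mem_antidiagonalTuple, Fin.sum_univ_three]
    simp only [Matrix.cons_val_zero, Matrix.cons_val_one, Matrix.head_cons,
      Matrix.cons_val_two, Matrix.tail_cons]
    omega
  · rw [Finset.Nat.mem_antidiagonalTuple, Fin.sum_univ_three]
    simp only [Matrix.cons_val_zero, Matrix.cons_val_one, Matrix.head_cons,
      Matrix.cons_val_two, Matrix.tail_cons]
    omega
  · funext i; fin_cases i <;> simp
  · funext i; fin_cases i <;> simp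
  · simp

variable {R : Type*} [CommRing R]

theorem key_yz (X Y Z : R) (s : ℕ) :
    (∑ t ∈ Finset.Nat.antidiagonalTuple 3 s, X ^ (t 0) * Y ^ (t 1) * Z ^ (t 2)) * (Y - Z)
      = (∑ a ∈ Finset.range (s+2), X ^ a * Y ^ (s+1-a))
        - ∑ a ∈ Finset.range (s+2), X ^ a * Z ^ (s+1-a) := by
  rw [adt3_sum s (fun a b c => X ^ a * Y ^ b * Z ^ c), Finset.sum_mul]
  have h1 : ∀ a ∈ Finset.range (s+1),
      (∑ b ∈ Finset.range (s - a + 1), X ^ a * Y ^ b * Z ^ (s - a - b)) * (Y - Z)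
        = X ^ a * (Y ^ (s - a + 1) - Z ^ (s - a + 1)) := by
    intro a ha
    have h2 : (∑ b ∈ Finset.range (s - a + 1), X ^ a * Y ^ b * Z ^ (s - a - b))
        = X ^ a * ∑ b ∈ Finset.range (s - a + 1), Y ^ b * Z ^ ((s - a + 1) - 1 - b) := by
      rw [Finset.mul_sum]
      refine Finset.sum_congr rfl fun b hb => ?_
      rw [show (s - a + 1) - 1 - b = s - a - b from by omega, mul_assoc]
    rw [h2, mul_assoc, geom_sum₂_mul]
  rw [Finset.sum_congr rfl h1, ← Finset.sum_sub_distrib, Finset.sum_range_succ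
    (fun a => X ^ a * Y ^ (s+1-a) - X ^ a * Z ^ (s+1-a)) (s+1)]
  simp only [Nat.sub_self, pow_zero, sub_self, add_zero]
  refine Finset.sum_congr rfl fun a ha => ?_
  rw [Finset.mem_range] at ha
  rw [mul_sub]
  congr 3 <;> omega

theorem key_xy (X Y Z : R) (s : ℕ) :
    (∑ t ∈ Finset.Nat.antidiagonalTuple 3 s, X ^ (t 0) * Y ^ (t 1) * Z ^ (t 2)) * (X - Y)
      = (∑ a ∈ Finset.range (s+2), X ^ (s+1-a) * Z ^ a)
        - ∑ a ∈ Finset.range (s+2), Y ^ (s+1-a) * Z ^ a := by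
  rw [adt3_swap s (fun a b c => X ^ a * Y ^ b * Z ^ c)]
  calc (∑ t ∈ Finset.Nat.antidiagonalTuple 3 s, X ^ (t 2) * Y ^ (t 1) * Z ^ (t 0)) * (X - Y)
      = (∑ t ∈ Finset.Nat.antidiagonalTuple 3 s, Z ^ (t 0) * Y ^ (t 1) * X ^ (t 2)) * (X - Y) := by
        rw [Finset.sum_congr rfl (fun t _ => by ring :
          ∀ t ∈ Finset.Nat.antidiagonalTuple 3 s,
            X ^ (t 2) * Y ^ (t 1) * Z ^ (t 0) = Z ^ (t 0) * Y ^ (t 1) * X ^ (t 2))]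
    _ = -((∑ t ∈ Finset.Nat.antidiagonalTuple 3 s, Z ^ (t 0) * Y ^ (t 1) * X ^ (t 2)) * (Y - X)) := by
        rw [← mul_neg, neg_sub]
    _ = _ := by
        rw [key_yz Z Y X s, neg_sub]
        congr 1 <;> exact Finset.sum_congr rfl fun a _ => mul_comm _ _


theorem refl_mul {R : Type*} [CommRing R] {Y Z : R} {N : ℕ} :
    ∑ a ∈ Finset.range N, Y^(N-1-a) * Z^a = ∑ a ∈ Finset.range N, Y^a * Z^(N-1-a) := by
  rw [← Finset.sum_range_reflect (fun a => Y^a * Z^(N-1-a)) N]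
  refine Finset.sum_congr rfl fun a ha => ?_
  rw [Finset.mem_range] at ha
  congr 2
  omega

end CombAux

section ValueLemmas

noncomputable def X1 : T3 k n := x k n ⊗ₜ[k] ((1:A k n) ⊗ₜ[k] (1:A k n))
noncomputable def X2 : T3 k n := (1:A k n) ⊗ₜ[k] (x k n ⊗ₜ[k] (1:A k n))
noncomputable def X3 : T3 k n := (1:A k n) ⊗ₜ[k] ((1:A k n) ⊗ₜ[k] x k n)

lemma X1_pow (p : ℕ) : X1 k n ^ p = (x k n ^ p) ⊗ₜ[k] ((1:A k n) ⊗ₜ[k] (1:A k n)) := by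
  rw [X1, Algebra.TensorProduct.tmul_pow, Algebra.TensorProduct.tmul_pow, one_pow]

lemma X2_pow (p : ℕ) : X2 k n ^ p = (1:A k n) ⊗ₜ[k] ((x k n ^ p) ⊗ₜ[k] (1:A k n)) := by
  rw [X2, Algebra.TensorProduct.tmul_pow, Algebra.TensorProduct.tmul_pow, one_pow]

lemma X3_pow (p : ℕ) : X3 k n ^ p = (1:A k n) ⊗ₜ[k] ((1:A k n) ⊗ₜ[k] (x k n ^ p)) := by
  rw [X3, Algebra.TensorProduct.tmul_pow, Algebra.TensorProduct.tmul_pow, one_pow]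

lemma X_mul (p q r : ℕ) :
    X1 k n ^ p * X2 k n ^ q * X3 k n ^ r
      = (x k n ^ p) ⊗ₜ[k] ((x k n ^ q) ⊗ₜ[k] (x k n ^ r)) := by
  rw [X1_pow, X2_pow, X3_pow, Algebra.TensorProduct.tmul_mul_tmul,
    Algebra.TensorProduct.tmul_mul_tmul, Algebra.TensorProduct.tmul_mul_tmul,
    Algebra.TensorProduct.tmul_mul_tmul]
  simp

noncomputable def G : T3 k n :=
  ∑ t ∈ Finset.Nat.antidiagonalTuple 3 (n-2), X1 k n ^ (t 0) * X2 k n ^ (t 1) * X3 k n ^ (t 2)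

noncomputable def ι13' : T2 k n →ₐ[k] T3 k n :=
  Algebra.TensorProduct.map (AlgHom.id k (A k n)) Algebra.TensorProduct.includeRight

lemma ι13_tmul (a b : A k n) : ι13 k n (a ⊗ₜ[k] b) = a ⊗ₜ[k] ((1:A k n) ⊗ₜ[k] b) := by
  simp [ι13]

lemma ι13_eq : ι13 k n = (ι13' k n).toLinearMap := by
  apply TensorProduct.ext'
  intro a b
  simp [ι13, ι13', Algebra.TensorProduct.map_tmul]

lemma ι13_mul (α β : T2 k n) : ι13 k n (α * β) = ι13 k n α * ι13 k n β := by
  rw [ι13_eq]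
  simp only [AlgHom.toLinearMap_apply]
  exact map_mul _ _ _

lemma ι13_u : ι13 k n (u k n) = X1 k n - X3 k n := by
  rw [u, map_sub, ι13_tmul, ι13_tmul, X1, X3]

lemma ι13_v : ι13 k n (v k n) = ∑ a ∈ Finset.range n, X1 k n ^ a * X3 k n ^ (n-1-a) := by
  rw [v, map_sum]
  refine Finset.sum_congr rfl fun a _ => ?_
  rw [ι13_tmul, X1_pow, X3_pow, Algebra.TensorProduct.tmul_mul_tmul,
    Algebra.TensorProduct.tmul_mul_tmul]
  simp

lemma e12_odd' {m : ℕ} (h : Odd m) : e12 k n m = X1 k n - X2 k n := by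
  rw [e12, if_pos h]; rfl

lemma e12_even' {m : ℕ} (h : ¬ Odd m) :
    e12 k n m = ∑ a ∈ Finset.range n, X1 k n ^ a * X2 k n ^ (n-1-a) := by
  rw [e12, if_neg h]
  refine Finset.sum_congr rfl fun a _ => ?_
  rw [X1_pow, X2_pow, Algebra.TensorProduct.tmul_mul_tmul, Algebra.TensorProduct.tmul_mul_tmul]
  simp

lemma e23_odd' {m : ℕ} (h : Odd m) : e23 k n m = X2 k n - X3 k n := by
  rw [e23, if_pos h]; rfl

lemma e23_even' {m : ℕ} (h : ¬ Odd m) :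
    e23 k n m = ∑ a ∈ Finset.range n, X2 k n ^ a * X3 k n ^ (n-1-a) := by
  rw [e23, if_neg h]
  refine Finset.sum_congr rfl fun a _ => ?_
  rw [X2_pow, X3_pow, Algebra.TensorProduct.tmul_mul_tmul, Algebra.TensorProduct.tmul_mul_tmul]
  simp

lemma g_apply (α : T2 k n) : g k n α = ι13 k n α * G k n := by
  have h : g k n = (LinearMap.mulRight k (G k n)) ∘ₗ ι13 k n := by
    apply TensorProduct.ext'
    intro a b
    simp only [g, LinearMap.sum_apply, TensorProduct.map_tmul, LinearMap.mulRight_apply,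
      LinearMap.comp_apply, LinearMap.mulLeft_apply, TensorProduct.mk_apply, ι13_tmul, G,
      Finset.mul_sum]
    refine Finset.sum_congr rfl fun t _ => ?_
    rw [X_mul, Algebra.TensorProduct.tmul_mul_tmul, Algebra.TensorProduct.tmul_mul_tmul,
      one_mul, mul_comm b (x k n ^ (t 2))]
  rw [h]; rfl

lemma G_mul_12 (hn : 3 ≤ n) :
    G k n * (X1 k n - X2 k n) = ι13 k n (v k n) - e23 k n 0 := by
  have h := key_xy (X1 k n) (X2 k n) (X3 k n) (n-2)
  rw [show n-2+2 = n from by omega, show n-2+1 = n-1 from by omega] at h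
  rw [G, h, ι13_v, e23_even' k n (m := 0) (by decide)]
  congr 1 <;> exact refl_mul

lemma G_mul_23 (hn : 3 ≤ n) :
    G k n * (X2 k n - X3 k n) = e12 k n 0 - ι13 k n (v k n) := by
  have h := key_yz (X1 k n) (X2 k n) (X3 k n) (n-2)
  rw [show n-2+2 = n from by omega, show n-2+1 = n-1 from by omega] at h
  rw [G, h, ι13_v, e12_even' k n (m := 0) (by decide)]

lemma J1 (α : T2 k n) :
    ι13 k n (α * u k n) = ι13 k n α * e12 k n 1 + ι13 k n α * e23 k n 1 := by
  rw [ι13_mul, ι13_u, e12_odd' k n (m := 1) odd_one, e23_odd' k n (m := 1) odd_one]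
  ring

lemma J2 (hn : 3 ≤ n) (α : T2 k n) :
    g k n α * e12 k n 1 = ι13 k n (α * v k n) - ι13 k n α * e23 k n 0 := by
  rw [g_apply, e12_odd' k n (m := 1) odd_one, ι13_mul]
  linear_combination ι13 k n α * G_mul_12 k n hn

lemma J3 (hn : 3 ≤ n) (α : T2 k n) :
    g k n α * e23 k n 1 = ι13 k n α * e12 k n 0 - ι13 k n (α * v k n) := by
  rw [g_apply, e23_odd' k n (m := 1) odd_one, ι13_mul]
  linear_combination ι13 k n α * G_mul_23 k n hn

lemma J4 (hn : 3 ≤ n) (α : T2 k n) :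
    g k n (α * u k n) = ι13 k n α * e12 k n 0 - ι13 k n α * e23 k n 0 := by
  rw [g_apply, ι13_mul, ι13_u]
  linear_combination ι13 k n α * G_mul_12 k n hn + ι13 k n α * G_mul_23 k n hn

end ValueLemmas


section ComponentLemmas

/-- Abbreviation for the inclusion of the `p` component of `N`. -/
noncomputable abbrev Lf (p : ℕ × ℕ) : T3 k n →ₗ[k] N k n :=
  DirectSum.lof k (ℕ × ℕ) (fun _ => T3 k n) p

/-- Abbreviation for the inclusion of the `i` component of `M`. -/
noncomputable abbrev LM (i : ℕ) : T2 k n →ₗ[k] M k n :=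
  DirectSum.lof k ℕ (fun _ => T2 k n) i

lemma dP_lof_zero (α : T2 k n) : dP k n (LM k n 0 α) = 0 := by
  rw [dP, DirectSum.toModule_lof]
  rfl

lemma dP_lof_succ (j : ℕ) (α : T2 k n) :
    dP k n (LM k n (j+1) α) = LM k n j (α * w k n (j+1)) := by
  rw [dP, DirectSum.toModule_lof]
  rfl

lemma w_even {m : ℕ} (h : ¬ Odd m) : w k n m = v k n := by rw [w, if_neg h]

lemma w_odd {m : ℕ} (h : Odd m) : w k n m = u k n := by rw [w, if_pos h]

lemma dP_lof_even (i : ℕ) (α : T2 k n) :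
    dP k n (LM k n (2*(i+1)) α) = LM k n (2*i+1) (α * v k n) := by
  rw [show 2*(i+1) = (2*i+1)+1 from by ring, dP_lof_succ,
    w_even k n (by rw [Nat.odd_iff]; omega)]

lemma dP_lof_odd (i : ℕ) (α : T2 k n) :
    dP k n (LM k n (2*i+1) α) = LM k n (2*i) (α * u k n) := by
  rw [show 2*i+1 = (2*i)+1 from rfl, dP_lof_succ, w_odd k n (by rw [Nat.odd_iff]; omega)]

lemma dN_lof (p q : ℕ) (β : T3 k n) :
    dN k n (Lf k n (p,q) β)
      = (if p = 0 then 0 else Lf k n (p-1,q) (β * e12 k n p))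
        + (if q = 0 then 0
            else ((-1:ℤ)^(p+1)) • Lf k n (p, q-1) (β * e23 k n q)) := by
  rcases p with _|p <;> rcases q with _|q <;>
    · rw [dN, DirectSum.toModule_lof]
      simp [LinearMap.add_apply]

lemma δ₂_lof_even (i : ℕ) (α : T2 k n) :
    δ₂ k n (LM k n (2*i) α)
      = (∑ j ∈ Finset.range (i+1), Lf k n (2*j, 2*i - 2*j) (ι13 k n α))
        - ∑ j ∈ Finset.range i, Lf k n (2*j+1, 2*i - 2*j - 1) (g k n α) := by
  rw [δ₂, DirectSum.toModule_lof, if_pos (even_two_mul i),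
    show 2*i/2 = i from by omega]
  simp only [LinearMap.sub_apply, LinearMap.sum_apply, LinearMap.comp_apply]

lemma δ₂_lof_odd (i : ℕ) (α : T2 k n) :
    δ₂ k n (LM k n (2*i+1) α)
      = (∑ j ∈ Finset.range (i+1), Lf k n (2*j, 2*i+1 - 2*j) (ι13 k n α))
        - ∑ j ∈ Finset.range (i+1), Lf k n (2*j+1, 2*i - 2*j) (ι13 k n α) := by
  rw [δ₂, DirectSum.toModule_lof, if_neg (by rw [Nat.even_iff]; omega),
    show (2*i+1)/2 = i from by omega]
  simp only [LinearMap.sub_apply, LinearMap.sum_apply, LinearMap.comp_apply]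
  congr 1
  refine Finset.sum_congr rfl fun j _ => ?_
  rw [show 2*i+1-2*j-1 = 2*i-2*j from by omega]

end ComponentLemmas


section SumLemmas

lemma e12_eq_even {m : ℕ} (h : ¬ Odd m) : e12 k n m = e12 k n 0 := by
  rw [e12, e12, if_neg h, if_neg (by decide)]

lemma e12_eq_odd {m : ℕ} (h : Odd m) : e12 k n m = e12 k n 1 := by
  rw [e12, e12, if_pos h, if_pos odd_one]

lemma e23_eq_even {m : ℕ} (h : ¬ Odd m) : e23 k n m = e23 k n 0 := by
  rw [e23, e23, if_neg h, if_neg (by decide)]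

lemma e23_eq_odd {m : ℕ} (h : Odd m) : e23 k n m = e23 k n 1 := by
  rw [e23, e23, if_pos h, if_pos odd_one]

lemma sum_dN_evenrow (i : ℕ) (γ : T3 k n) :
    ∑ j ∈ Finset.range (i+1+1), dN k n (Lf k n (2*j, 2*(i+1)-2*j) γ)
      = (∑ j ∈ Finset.range (i+1), Lf k n (2*j+1, 2*i-2*j) (γ * e12 k n 0))
        - ∑ j ∈ Finset.range (i+1), Lf k n (2*j, 2*i+1-2*j) (γ * e23 k n 0) := by
  have h1 : ∀ j ∈ Finset.range (i+1+1), dN k n (Lf k n (2*j, 2*(i+1)-2*j) γ)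
      = (if 2*j = 0 then 0 else Lf k n (2*j-1, 2*(i+1)-2*j) (γ * e12 k n (2*j)))
        + (if 2*(i+1)-2*j = 0 then 0
            else ((-1:ℤ)^(2*j+1)) • Lf k n (2*j, 2*(i+1)-2*j-1) (γ * e23 k n (2*(i+1)-2*j))) :=
    fun j _ => dN_lof k n (2*j) (2*(i+1)-2*j) γ
  rw [Finset.sum_congr rfl h1, Finset.sum_add_distrib, sub_eq_add_neg]
  congr 1
  · rw [Finset.sum_range_succ']
    simp only [Nat.mul_zero, reduceIte, add_zero]
    refine Finset.sum_congr rfl fun j hj => ?_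
    rw [Finset.mem_range] at hj
    rw [if_neg (by omega),
      show ((2*(j+1)-1 : ℕ), 2*(i+1)-2*(j+1)) = ((2*j+1 : ℕ), 2*i-2*j) from by
        rw [show (2*(j+1)-1 : ℕ) = 2*j+1 from by omega, show (2*(i+1)-2*(j+1) : ℕ) = 2*i-2*j from by omega],
      e12_eq_even k n (m := 2*(j+1)) (by rw [Nat.odd_iff]; omega)]
  · rw [Finset.sum_range_succ, if_pos (by omega), add_zero, ← Finset.sum_neg_distrib]
    refine Finset.sum_congr rfl fun j hj => ?_
    rw [Finset.mem_range] at hj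
    rw [if_neg (by omega), Odd.neg_one_pow ⟨j, by ring⟩, neg_smul, one_smul,
      show ((2*j : ℕ), 2*(i+1)-2*j-1) = ((2*j : ℕ), 2*i+1-2*j) from by
        rw [show (2*j : ℕ) = 2*j from by omega, show (2*(i+1)-2*j-1 : ℕ) = 2*i+1-2*j from by omega],
      e23_eq_even k n (m := 2*(i+1)-2*j) (by rw [Nat.odd_iff]; omega)]

lemma sum_dN_oddrow_g (i : ℕ) (γ : T3 k n) :
    ∑ j ∈ Finset.range (i+1), dN k n (Lf k n (2*j+1, 2*(i+1)-2*j-1) γ)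
      = (∑ j ∈ Finset.range (i+1), Lf k n (2*j, 2*i+1-2*j) (γ * e12 k n 1))
        + ∑ j ∈ Finset.range (i+1), Lf k n (2*j+1, 2*i-2*j) (γ * e23 k n 1) := by
  have h1 : ∀ j ∈ Finset.range (i+1), dN k n (Lf k n (2*j+1, 2*(i+1)-2*j-1) γ)
      = Lf k n (2*j, 2*i+1-2*j) (γ * e12 k n 1)
        + Lf k n (2*j+1, 2*i-2*j) (γ * e23 k n 1) := by
    intro j hj
    rw [Finset.mem_range] at hj
    rw [dN_lof, if_neg (by omega), if_neg (by omega), Even.neg_one_pow ⟨j+1, by ring⟩, one_smul,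
      show ((2*j+1-1 : ℕ), 2*(i+1)-2*j-1) = ((2*j : ℕ), 2*i+1-2*j) from by
        rw [show (2*j+1-1 : ℕ) = 2*j from by omega, show (2*(i+1)-2*j-1 : ℕ) = 2*i+1-2*j from by omega],
      show ((2*j+1 : ℕ), 2*(i+1)-2*j-1-1) = ((2*j+1 : ℕ), 2*i-2*j) from by
        rw [show (2*j+1 : ℕ) = 2*j+1 from by omega, show (2*(i+1)-2*j-1-1 : ℕ) = 2*i-2*j from by omega],
      e12_eq_odd k n (m := 2*j+1) (by rw [Nat.odd_iff]; omega),
      e23_eq_odd k n (m := 2*(i+1)-2*j-1) (by rw [Nat.odd_iff]; omega)]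
  rw [Finset.sum_congr rfl h1, Finset.sum_add_distrib]

lemma sum_dN_evenrow' (i : ℕ) (γ : T3 k n) :
    ∑ j ∈ Finset.range (i+1), dN k n (Lf k n (2*j, 2*i+1-2*j) γ)
      = (∑ j ∈ Finset.range i, Lf k n (2*j+1, 2*i-2*j-1) (γ * e12 k n 0))
        - ∑ j ∈ Finset.range (i+1), Lf k n (2*j, 2*i-2*j) (γ * e23 k n 1) := by
  have h1 : ∀ j ∈ Finset.range (i+1), dN k n (Lf k n (2*j, 2*i+1-2*j) γ)
      = (if 2*j = 0 then 0 else Lf k n (2*j-1, 2*i+1-2*j) (γ * e12 k n (2*j)))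
        + (if 2*i+1-2*j = 0 then 0
            else ((-1:ℤ)^(2*j+1)) • Lf k n (2*j, 2*i+1-2*j-1) (γ * e23 k n (2*i+1-2*j))) :=
    fun j _ => dN_lof k n (2*j) (2*i+1-2*j) γ
  rw [Finset.sum_congr rfl h1, Finset.sum_add_distrib, sub_eq_add_neg]
  congr 1
  · rw [Finset.sum_range_succ']
    simp only [Nat.mul_zero, reduceIte, add_zero]
    refine Finset.sum_congr rfl fun j hj => ?_
    rw [Finset.mem_range] at hj
    rw [if_neg (by omega),
      show ((2*(j+1)-1 : ℕ), 2*i+1-2*(j+1)) = ((2*j+1 : ℕ), 2*i-2*j-1) from by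
        rw [show (2*(j+1)-1 : ℕ) = 2*j+1 from by omega, show (2*i+1-2*(j+1) : ℕ) = 2*i-2*j-1 from by omega],
      e12_eq_even k n (m := 2*(j+1)) (by rw [Nat.odd_iff]; omega)]
  · rw [← Finset.sum_neg_distrib]
    refine Finset.sum_congr rfl fun j hj => ?_
    rw [Finset.mem_range] at hj
    rw [if_neg (by omega), Odd.neg_one_pow ⟨j, by ring⟩, neg_smul, one_smul,
      show ((2*j : ℕ), 2*i+1-2*j-1) = ((2*j : ℕ), 2*i-2*j) from by
        rw [show (2*j : ℕ) = 2*j from by omega, show (2*i+1-2*j-1 : ℕ) = 2*i-2*j from by omega],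
      e23_eq_odd k n (m := 2*i+1-2*j) (by rw [Nat.odd_iff]; omega)]

lemma sum_dN_oddrow' (i : ℕ) (γ : T3 k n) :
    ∑ j ∈ Finset.range (i+1), dN k n (Lf k n (2*j+1, 2*i-2*j) γ)
      = (∑ j ∈ Finset.range (i+1), Lf k n (2*j, 2*i-2*j) (γ * e12 k n 1))
        + ∑ j ∈ Finset.range i, Lf k n (2*j+1, 2*i-2*j-1) (γ * e23 k n 0) := by
  have h1 : ∀ j ∈ Finset.range (i+1), dN k n (Lf k n (2*j+1, 2*i-2*j) γ)
      = Lf k n (2*j, 2*i-2*j) (γ * e12 k n 1)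
        + (if 2*i-2*j = 0 then 0
            else ((-1:ℤ)^(2*j+1+1)) • Lf k n (2*j+1, 2*i-2*j-1) (γ * e23 k n (2*i-2*j))) := by
    intro j hj
    rw [dN_lof, if_neg (by omega),
      show ((2*j+1-1 : ℕ), 2*i-2*j) = ((2*j : ℕ), 2*i-2*j) from by
        rw [show (2*j+1-1 : ℕ) = 2*j from by omega, show (2*i-2*j : ℕ) = 2*i-2*j from by omega],
      e12_eq_odd k n (m := 2*j+1) (by rw [Nat.odd_iff]; omega)]
  rw [Finset.sum_congr rfl h1, Finset.sum_add_distrib]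
  congr 1
  rw [Finset.sum_range_succ, if_pos (by omega), add_zero]
  refine Finset.sum_congr rfl fun j hj => ?_
  rw [Finset.mem_range] at hj
  rw [if_neg (by omega), Even.neg_one_pow ⟨j+1, by ring⟩, one_smul,
    e23_eq_even k n (m := 2*i-2*j) (by rw [Nat.odd_iff]; omega)]

end SumLemmas


/-- for `A = k[x]/(xⁿ)`, `n ≥ 3`, the diagonal `δ₂` above is a
chain map `P → P ⊗_A P`: it commutes with the differentials with the Koszul
sign appropriate to its degree, i.e. `∂(δ₂) = 0`:
`d_{P⊗P} ∘ δ₂ + δ₂ ∘ d_P = 0`. -/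
theorem stmt15 (hn : 3 ≤ n) : dN k n ∘ₗ δ₂ k n + δ₂ k n ∘ₗ dP k n = 0 := by
  refine DirectSum.linearMap_ext k fun m => LinearMap.ext fun α => ?_
  simp only [LinearMap.comp_apply, LinearMap.add_apply, LinearMap.zero_comp,
    LinearMap.zero_apply]
  obtain ⟨i, rfl | rfl⟩ := Nat.even_or_odd' m
  · -- m = 2*i
    rcases i with _ | i
    · -- m = 0
      rw [δ₂_lof_even k n 0 α, show (2*0 : ℕ) = 0 from rfl, dP_lof_zero, map_zero, add_zero,
        Finset.sum_range_zero, sub_zero, Finset.sum_range_succ, Finset.sum_range_zero, zero_add]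
      rw [show (2*0 : ℕ) = 0 from rfl, show (0-0 : ℕ) = 0 from rfl,
        dN_lof k n 0 0 (ι13 k n α), if_pos rfl, if_pos rfl, add_zero]
    · -- m = 2*(i+1)
      rw [dP_lof_even k n i (α := α), δ₂_lof_odd k n i (α * v k n), δ₂_lof_even k n (i+1) α,
        map_sub, map_sum, map_sum, sum_dN_evenrow k n i (ι13 k n α),
        sum_dN_oddrow_g k n i (g k n α)]
      simp only [J2 k n hn α, J3 k n hn α, map_sub, Finset.sum_sub_distrib]
      abel
  · -- m = 2*i+1
    rw [dP_lof_odd k n i (α := α), δ₂_lof_even k n i (α * u k n), δ₂_lof_odd k n i α,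
      map_sub, map_sum, map_sum, sum_dN_evenrow' k n i (ι13 k n α),
      sum_dN_oddrow' k n i (ι13 k n α)]
    simp only [J1 k n α, J4 k n hn α, map_add, map_sub, Finset.sum_add_distrib,
      Finset.sum_sub_distrib]
    abel

end Stmt15
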